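/- arXiv:1210.0768 — 3 statements merged into one kernel-verified Lean document; each statement's English description precedes it below -/
import Mathlib

section
/- The Izergin–Korepin determinant satisfies Kₙ(x̄ | ȳ + c) = (-1)ⁿ f(ȳ, x̄)⁻¹ Kₙ(ȳ | x̄), where f(ȳ,x̄) = ∏ᵢ∏ⱼ f(yᵢ,xⱼ). -/
/-- The Izergin–Korepin determinant
Kₙ(x̄|ȳ) = ∏_{ℓ<m} g(x_ℓ,x_m) g(y_m,y_ℓ) · ∏_{i,j} h(x_i,y_j) · det[t(x_i,y_j)],
with g(x,y)=c/(x-y), h(x,y)=(x-y+c)/c, t(x,y)=c²/((x-y+c)(x-y)). -/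
noncomputable def IK (c : ℂ) (n : ℕ) (x y : Fin n → ℂ) : ℂ :=
  (∏ p ∈ Finset.univ.filter (fun p : Fin n × Fin n => p.1 < p.2),
      (c / (x p.1 - x p.2)) * (c / (y p.2 - y p.1))) *
  ((∏ i, ∏ j, (x i - y j + c) / c) *
    Matrix.det (Matrix.of fun i j => c ^ 2 / ((x i - y j + c) * (x i - y j))))

lemma IK_scalar (c : ℂ) (n : ℕ) (x y : Fin n → ℂ)
    (hxyc : ∀ i j, x i - y j ≠ c) :
    (∏ i, ∏ j, (x i - (y j + c) + c) / c)
      = (-1) ^ n * (∏ i, ∏ j, (y i - x j + c) / (y i - x j))⁻¹ *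
        ∏ i, ∏ j, (y i - x j + c) / c := by
  have h1 : (∏ i, ∏ j, (y i - x j + c) / (y i - x j))⁻¹
      = ∏ i, ∏ j, (y i - x j) / (y i - x j + c) := by
    rw [← Finset.prod_inv_distrib]
    refine Finset.prod_congr rfl fun i _ => ?_
    rw [← Finset.prod_inv_distrib]
    exact Finset.prod_congr rfl fun j _ => inv_div _ _
  rw [h1]
  have h2 : (∏ i, ∏ j, (y i - x j) / (y i - x j + c)) * ∏ i, ∏ j, (y i - x j + c) / c
      = ∏ i, ∏ j, (y i - x j) / c := by
    rw [← Finset.prod_mul_distrib]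
    refine Finset.prod_congr rfl fun i _ => ?_
    rw [← Finset.prod_mul_distrib]
    refine Finset.prod_congr rfl fun j _ => ?_
    have hne : y i - x j + c ≠ 0 := by
      intro h
      exact hxyc j i (by linear_combination -h)
    field_simp
  rw [mul_assoc, h2]
  have h3 : (∏ i, ∏ j, (y i - x j) / c) = (-1)^(n*n) * ∏ i, ∏ j, (x i - y j) / c := by
    rw [Finset.prod_comm]
    have e1 : ((-1:ℂ)^n)^n = ∏ _j : Fin n, (-1:ℂ)^n := by simp
    rw [pow_mul, e1, ← Finset.prod_mul_distrib]
    refine Finset.prod_congr rfl fun j _ => ?_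
    have e2 : ((-1:ℂ))^n = ∏ _i : Fin n, (-1:ℂ) := by simp
    rw [e2, ← Finset.prod_mul_distrib]
    refine Finset.prod_congr rfl fun i _ => ?_
    ring
  rw [h3]
  have h4 : ((-1:ℂ))^n * ((-1)^(n*n)) = 1 := by
    rw [← pow_add]
    have : Even (n + n * n) := by
      rcases Nat.even_or_odd n with h | h
      · exact h.add (h.mul_right n)
      · exact h.add_odd (h.mul h)
    exact this.neg_one_pow
  rw [← mul_assoc, h4, one_mul]
  refine Finset.prod_congr rfl fun i _ => Finset.prod_congr rfl fun j _ => ?_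
  ring_nf

/-- Kₙ(x̄ | ȳ + c) = (-1)ⁿ f(ȳ, x̄)⁻¹ Kₙ(ȳ | x̄), where
f(ȳ,x̄) = ∏ᵢ∏ⱼ (yᵢ - xⱼ + c)/(yᵢ - xⱼ). -/
theorem IK_reflection (c : ℂ) (hc : c ≠ 0) (n : ℕ) (x y : Fin n → ℂ)
    (hx : ∀ i j, i ≠ j → x i ≠ x j) (hy : ∀ i j, i ≠ j → y i ≠ y j)
    (hxy : ∀ i j, x i ≠ y j) (hxyc : ∀ i j, x i - y j ≠ c)
    (hxyc' : ∀ i j, x i - y j ≠ -c) :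
    IK c n x (fun j => y j + c)
      = (-1) ^ n * (∏ i, ∏ j, (y i - x j + c) / (y i - x j))⁻¹ * IK c n y x := by
  unfold IK
  -- prefactor equality
  have hpre : (∏ p ∈ Finset.univ.filter (fun p : Fin n × Fin n => p.1 < p.2),
      (c / (x p.1 - x p.2)) * (c / ((y p.2 + c) - (y p.1 + c))))
      = ∏ p ∈ Finset.univ.filter (fun p : Fin n × Fin n => p.1 < p.2),
      (c / (y p.1 - y p.2)) * (c / (x p.2 - x p.1)) := by
    refine Finset.prod_congr rfl fun p _ => ?_
    have e1 : (y p.2 + c) - (y p.1 + c) = -(y p.1 - y p.2) := by ring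
    have e2 : x p.2 - x p.1 = -(x p.1 - x p.2) := by ring
    rw [e1, e2, div_neg, div_neg]
    ring
  -- determinant equality
  have hdet : Matrix.det (Matrix.of fun i j : Fin n =>
        c ^ 2 / ((x i - (y j + c) + c) * (x i - (y j + c))))
      = Matrix.det (Matrix.of fun i j : Fin n =>
        c ^ 2 / ((y i - x j + c) * (y i - x j))) := by
    rw [← Matrix.det_transpose (Matrix.of fun i j : Fin n =>
        c ^ 2 / ((y i - x j + c) * (y i - x j)))]
    congr 1
    ext i j
    simp only [Matrix.transpose_apply, Matrix.of_apply]
    congr 1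
    ring
  have hmid := IK_scalar c n x y hxyc
  rw [hpre, hdet, hmid]
  ring
end

section
/- The rational functions G_k = 1 - Σ_{i=k+1}^{b} h(v_j,v_i)⁻¹ h(v_i,v_j)⁻¹ ∏_{l=k+1}^{i-1} f(v_j,v_l)⁻¹ f(v_l,v_j)⁻¹ satisfy the closed-form identity G_k = ∏_{l=k+1}^{b} f(v_j,v_l)⁻¹ f(v_l,v_j)⁻¹, for any fixed index j and any k, where h(x,y) = (x-y+c)/c and f(x,y) = (x-y+c)/(x-y). -/
lemma key_lemma (c x y : ℂ) (hc : c ≠ 0) (hxy : y = -x)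
    (h1 : x + c ≠ 0) (h2 : y + c ≠ 0) :
    ((x + c)/c)⁻¹ * ((y + c)/c)⁻¹ + ((x + c)/x)⁻¹ * ((y + c)/y)⁻¹ = 1 := by
  subst hxy
  rcases eq_or_ne x 0 with rfl | hx
  · simp [hc]
  · rw [inv_div, inv_div, inv_div, inv_div]
    field_simp
    ring

/-- Closed form for the rational functions
G_k = 1 - Σ_{i=k+1}^{b} h(v_j,v_i)⁻¹ h(v_i,v_j)⁻¹ ∏_{l=k+1}^{i-1} f(v_j,v_l)⁻¹ f(v_l,v_j)⁻¹:
G_k = ∏_{l=k+1}^{b} f(v_j,v_l)⁻¹ f(v_l,v_j)⁻¹,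
with f(x,y) = (x-y+c)/(x-y) and h(x,y) = (x-y+c)/c. -/
theorem G_closed_form (c : ℂ) (hc : c ≠ 0) (b : ℕ) (v : ℕ → ℂ)
    (hv : ∀ i ∈ Finset.Icc 1 b, ∀ j ∈ Finset.Icc 1 b, i ≠ j →
      v i - v j ≠ 0 ∧ v i - v j ≠ c ∧ v i - v j ≠ -c)
    (j k : ℕ) (hj : 1 ≤ j) (hjb : j ≤ b) (hk : 1 ≤ k) (hkb : k ≤ b) :
    1 - ∑ i ∈ Finset.Icc (k + 1) b,
        ((v j - v i + c) / c)⁻¹ * ((v i - v j + c) / c)⁻¹ *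
        ∏ l ∈ Finset.Ico (k + 1) i,
          ((v j - v l + c) / (v j - v l))⁻¹ * ((v l - v j + c) / (v l - v j))⁻¹
      = ∏ l ∈ Finset.Icc (k + 1) b,
          ((v j - v l + c) / (v j - v l))⁻¹ * ((v l - v j + c) / (v l - v j))⁻¹ := by
  obtain ⟨n, rfl⟩ : ∃ n, b = k + n := ⟨b - k, (Nat.add_sub_cancel' hkb).symm⟩
  clear hkb
  induction n generalizing k with
  | zero => simp
  | succ n ih =>
    have hkb' : k + 1 ≤ k + (n + 1) := by omega
    have h1 : v j - v (k + 1) + c ≠ 0 := by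
      rcases eq_or_ne j (k + 1) with rfl | hne
      · simpa using hc
      · have := hv j (Finset.mem_Icc.mpr ⟨hj, hjb⟩) (k + 1)
          (Finset.mem_Icc.mpr ⟨by omega, hkb'⟩) hne
        intro h; apply this.2.2; linear_combination h
    have h2 : v (k + 1) - v j + c ≠ 0 := by
      rcases eq_or_ne j (k + 1) with rfl | hne
      · simpa using hc
      · have := hv (k + 1) (Finset.mem_Icc.mpr ⟨by omega, hkb'⟩) j
          (Finset.mem_Icc.mpr ⟨hj, hjb⟩) (Ne.symm hne)
        intro h; apply this.2.2; linear_combination h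
    have hvn : k + 1 + n = k + (n + 1) := by omega
    have hv' : ∀ i ∈ Finset.Icc 1 (k + 1 + n), ∀ j ∈ Finset.Icc 1 (k + 1 + n),
        i ≠ j → v i - v j ≠ 0 ∧ v i - v j ≠ c ∧ v i - v j ≠ -c := by
      rw [hvn]; exact hv
    have hjb'' : j ≤ k + 1 + n := by omega
    have hrec := ih (k + 1) (by omega) hv' hjb''
    rw [hvn] at hrec
    rw [← Finset.Ico_add_one_right_eq_Icc] at hrec
    rw [← Finset.Ico_add_one_right_eq_Icc, Finset.sum_eq_sum_Ico_succ_bot (Nat.lt_add_one_of_le hkb'),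
        Finset.prod_eq_prod_Ico_succ_bot (Nat.lt_add_one_of_le hkb')]
    simp only [Finset.Ico_self, Finset.prod_empty, mul_one]
    have hsum : ∑ i ∈ Finset.Ico (k + 1 + 1) (k + (n + 1) + 1),
        ((v j - v i + c) / c)⁻¹ * ((v i - v j + c) / c)⁻¹ *
        ∏ l ∈ Finset.Ico (k + 1) i,
          ((v j - v l + c) / (v j - v l))⁻¹ * ((v l - v j + c) / (v l - v j))⁻¹
        = (((v j - v (k+1) + c) / (v j - v (k+1)))⁻¹ *
            ((v (k+1) - v j + c) / (v (k+1) - v j))⁻¹) *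
          ∑ i ∈ Finset.Ico (k + 1 + 1) (k + (n + 1) + 1),
        ((v j - v i + c) / c)⁻¹ * ((v i - v j + c) / c)⁻¹ *
        ∏ l ∈ Finset.Ico (k + 1 + 1) i,
          ((v j - v l + c) / (v j - v l))⁻¹ * ((v l - v j + c) / (v l - v j))⁻¹ := by
      rw [Finset.mul_sum]
      refine Finset.sum_congr rfl fun i hi => ?_
      rw [Finset.mem_Ico] at hi
      rw [Finset.prod_eq_prod_Ico_succ_bot (by omega)]
      ring
    rw [hsum]
    have key := key_lemma c (v j - v (k+1)) (v (k+1) - v j) hc (by ring) h1 h2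
    generalize hA : ((v j - v (k+1) + c) / c)⁻¹ * ((v (k+1) - v j + c) / c)⁻¹ = A at *
    generalize hF : ((v j - v (k+1) + c) / (v j - v (k+1)))⁻¹ *
      ((v (k+1) - v j + c) / (v (k+1) - v j))⁻¹ = F at *
    generalize hS : ∑ i ∈ Finset.Ico (k + 1 + 1) (k + (n + 1) + 1),
        ((v j - v i + c) / c)⁻¹ * ((v i - v j + c) / c)⁻¹ *
        ∏ l ∈ Finset.Ico (k + 1 + 1) i,
          ((v j - v l + c) / (v j - v l))⁻¹ * ((v l - v j + c) / (v l - v j))⁻¹ = S at *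
    generalize hP : ∏ l ∈ Finset.Ico (k + 1 + 1) (k + (n + 1) + 1),
          ((v j - v l + c) / (v j - v l))⁻¹ * ((v l - v j + c) / (v l - v j))⁻¹ = P at *
    linear_combination F * hrec - key
end

section
/- From the Yangian commutation relations, one derives the Bethe-ansatz exchange relation T₁₁(y) T₁₂(x₁)⋯T₁₂(xₙ) = f(x̄,y) T₁₂(x₁)⋯T₁₂(xₙ) T₁₁(y) - Σ_{ℓ=1}^{n} g(x_ℓ, y) f(x̄_ℓ, x_ℓ) T₁₂(x̄_ℓ ∪ {y}) T₁₁(x_ℓ), where f(x̄,y) = ∏ⱼ f(xⱼ,y), f(x̄_ℓ, x_ℓ) = ∏_{j≠ℓ} f(xⱼ, x_ℓ), and T₁₂ applied to a set means the (commuting) product of T₁₂ at its elements. -/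
private lemma prod_erase_zero' {n : ℕ} (F : Fin (n+1) → ℂ) :
    ∏ j ∈ Finset.univ.erase (0 : Fin (n+1)), F j = ∏ i : Fin n, F i.succ := by
  have hset : (Finset.univ.erase (0 : Fin (n+1))) = Finset.univ.image Fin.succ := by
    ext j
    simp only [Finset.mem_erase, Finset.mem_univ, and_true, Finset.mem_image, true_and,
      exists_prop]
    constructor
    · intro hj
      rcases Fin.eq_zero_or_eq_succ j with rfl | ⟨i, rfl⟩
      · exact absurd rfl hj
      · exact ⟨i, rfl⟩
    · rintro ⟨i, rfl⟩; exact Fin.succ_ne_zero i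
  rw [hset, Finset.prod_image (fun a _ b _ h => Fin.succ_injective n h)]

private lemma prod_erase_succ' {n : ℕ} (k : Fin n) (F : Fin (n+1) → ℂ) :
    ∏ j ∈ Finset.univ.erase k.succ, F j = F 0 * ∏ j ∈ Finset.univ.erase k, F j.succ := by
  have hset : (Finset.univ.erase k.succ)
      = insert (0 : Fin (n+1)) ((Finset.univ.erase k).image Fin.succ) := by
    ext j
    simp only [Finset.mem_erase, Finset.mem_univ, and_true, Finset.mem_insert, Finset.mem_image,
      exists_prop]
    constructor
    · intro hj
      rcases Fin.eq_zero_or_eq_succ j with rfl | ⟨i, rfl⟩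
      · exact Or.inl rfl
      · exact Or.inr ⟨i, fun h => hj (by rw [h]), rfl⟩
    · rintro (rfl | ⟨i, hi, rfl⟩)
      · exact (Fin.succ_ne_zero k).symm
      · exact fun h => hi (Fin.succ_injective n h)
  rw [hset, Finset.prod_insert
      (by simp only [Finset.mem_image]; rintro ⟨i, -, h⟩; exact Fin.succ_ne_zero i h),
    Finset.prod_image (fun a _ b _ h => Fin.succ_injective n h)]

/-- The Bethe-ansatz exchange relation
T₁₁(y) T₁₂(x₁)⋯T₁₂(xₙ) = f(x̄,y) T₁₂(x₁)⋯T₁₂(xₙ) T₁₁(y)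
  - Σ_ℓ g(x_ℓ,y) f(x̄_ℓ,x_ℓ) T₁₂(x̄_ℓ ∪ {y}) T₁₁(x_ℓ),
with g(x,y) = c/(x-y), f(x,y) = (x-y+c)/(x-y), derived from the Yangian
commutation relations [T_{ij}(u),T_{kl}(v)]
 = g(u,v)(T_{kj}(v)T_{il}(u) - T_{kj}(u)T_{il}(v)); in particular
[T₁₁(u),T₁₂(v)] = g(u,v)(T₁₁(v)T₁₂(u) - T₁₁(u)T₁₂(v)) and the T₁₂'s commute. -/
theorem bethe_exchange_relation (c : ℂ) (hc : c ≠ 0)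
    (A : Type*) [Ring A] [Algebra ℂ A]
    (T11 T12 : ℂ → A)
    (hAB : ∀ u v : ℂ, u ≠ v →
      T11 u * T12 v - T12 v * T11 u =
        (c / (u - v)) • (T11 v * T12 u - T11 u * T12 v))
    (hBB : ∀ u v : ℂ, T12 u * T12 v = T12 v * T12 u)
    (n : ℕ) (y : ℂ) (x : Fin n → ℂ)
    (hxy : ∀ i, x i ≠ y) (hx : ∀ i j, i ≠ j → x i ≠ x j) :
    T11 y * (List.ofFn fun i => T12 (x i)).prod
      = (∏ i, (x i - y + c) / (x i - y)) •
          ((List.ofFn fun i => T12 (x i)).prod * T11 y)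
        - ∑ ℓ : Fin n,
            ((c / (x ℓ - y)) * ∏ j ∈ Finset.univ.erase ℓ, (x j - x ℓ + c) / (x j - x ℓ)) •
            (T12 y * ((List.ofFn fun i => T12 (x i)).eraseIdx ℓ).prod * T11 (x ℓ)) := by
  have swap : ∀ u v : ℂ, u ≠ v → T11 u * T12 v
      = ((v - u + c)/(v - u)) • (T12 v * T11 u) - (c/(v - u)) • (T12 u * T11 v) := by
    intro u v huv
    have hd : v - u ≠ 0 := sub_ne_zero.mpr huv.symm
    have h1 := hAB u v huv
    have h2 := hAB v u huv.symm
    have hg1 : c / (u - v) = -(c / (v - u)) := by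
      rw [show u - v = -(v-u) by ring, div_neg]
    rw [hg1] at h1
    have hf : (v - u + c)/(v - u) = 1 + c/(v-u) := by rw [add_div, div_self hd]
    rw [hf]
    set g := c / (v - u) with hg
    linear_combination (norm := module) (1 + g) • h1 - g • h2
  induction n generalizing y with
  | zero => simp
  | succ n ih =>
    have hx'y : ∀ i : Fin n, x i.succ ≠ y := fun i => hxy i.succ
    have hx'x0 : ∀ i : Fin n, x i.succ ≠ x 0 := fun i => hx i.succ 0 (Fin.succ_ne_zero i)
    have hx' : ∀ i j : Fin n, i ≠ j → x i.succ ≠ x j.succ :=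
      fun i j hij => hx i.succ j.succ (fun h => hij (Fin.succ_injective n h))
    have ih1 := ih y (fun i => x i.succ) hx'y hx'
    have ih2 := ih (x 0) (fun i => x i.succ) hx'x0 hx'
    beta_reduce at ih1 ih2
    have hL : (List.ofFn fun i : Fin (n+1) => T12 (x i)).prod
        = T12 (x 0) * (List.ofFn fun i : Fin n => T12 (x i.succ)).prod := by
      rw [List.ofFn_succ, List.prod_cons]
    have e0 : ((List.ofFn fun i : Fin (n+1) => T12 (x i)).eraseIdx ((0:Fin (n+1)) : ℕ)).prod
        = (List.ofFn fun i : Fin n => T12 (x i.succ)).prod := by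
      simp [List.ofFn_succ]
    have eS : ∀ k : Fin n,
        ((List.ofFn fun i : Fin (n+1) => T12 (x i)).eraseIdx ((k.succ : Fin (n+1)) : ℕ)).prod
        = T12 (x 0) * ((List.ofFn fun i : Fin n => T12 (x i.succ)).eraseIdx (k : ℕ)).prod := by
      intro k; simp [List.ofFn_succ, Fin.val_succ]
    rw [Fin.prod_univ_succ, Fin.sum_univ_succ, hL, e0]
    simp only [eS, prod_erase_zero', prod_erase_succ']
    rw [← mul_assoc, swap y (x 0) (hxy 0).symm]
    rw [sub_mul, smul_mul_assoc, smul_mul_assoc, mul_assoc, mul_assoc, ih1, ih2]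
    have hBswap : ∀ z : A, T12 (x 0) * (T12 y * z) = T12 y * (T12 (x 0) * z) := fun z => by
      rw [← mul_assoc, hBB, mul_assoc]
    simp only [mul_sub, Finset.mul_sum, mul_smul_comm, smul_sub, smul_smul, Finset.smul_sum,
      mul_assoc, hBswap]
    have key : ∀ k : Fin n, c/(x k.succ - y) * ((x 0 - x k.succ + c)/(x 0 - x k.succ))
        = (x 0 - y + c)/(x 0 - y) * (c/(x k.succ - y)) - c/(x 0 - y) * (c/(x k.succ - x 0)) := by
      intro k
      have h1 : x k.succ - y ≠ 0 := sub_ne_zero.mpr (hxy k.succ)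
      have h2 : x 0 - y ≠ 0 := sub_ne_zero.mpr (hxy 0)
      have h3 : x 0 - x k.succ ≠ 0 := sub_ne_zero.mpr (hx 0 k.succ (Fin.succ_ne_zero k).symm)
      have h4 : x k.succ - x 0 ≠ 0 := sub_ne_zero.mpr (hx'x0 k)
      field_simp
      ring
    have hsum : ∑ k : Fin n,
          (c / (x k.succ - y) *
              ((x 0 - x k.succ + c) / (x 0 - x k.succ) *
                ∏ j ∈ Finset.univ.erase k, (x j.succ - x k.succ + c) / (x j.succ - x k.succ))) •
            (T12 y * (T12 (x 0) * (((List.ofFn fun i => T12 (x i.succ)).eraseIdx (k:ℕ)).prod * T11 (x k.succ))))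
        = (∑ k : Fin n,
          ((x 0 - y + c) / (x 0 - y) *
              (c / (x k.succ - y) *
                ∏ j ∈ Finset.univ.erase k, (x j.succ - x k.succ + c) / (x j.succ - x k.succ))) •
            (T12 y * (T12 (x 0) * (((List.ofFn fun i => T12 (x i.succ)).eraseIdx (k:ℕ)).prod * T11 (x k.succ)))))
        - ∑ k : Fin n,
          (c / (x 0 - y) *
              (c / (x k.succ - x 0) *
                ∏ j ∈ Finset.univ.erase k, (x j.succ - x k.succ + c) / (x j.succ - x k.succ))) •
            (T12 y * (T12 (x 0) * (((List.ofFn fun i => T12 (x i.succ)).eraseIdx (k:ℕ)).prod * T11 (x k.succ)))) := by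
      rw [← Finset.sum_sub_distrib]
      refine Finset.sum_congr rfl fun k _ => ?_
      rw [← sub_smul]
      congr 1
      linear_combination (∏ j ∈ Finset.univ.erase k, (x j.succ - x k.succ + c) / (x j.succ - x k.succ)) * key k
    rw [hsum]
    abel
end
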